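/- If X_1, X_2, X_3 are i.i.d. with density α x^{-α-1}·1{x ≥ 1} (α > 0), then P(X_1 X_2 > x, X_1 X_3 > x) is asymptotically equivalent to C x^{-α} as x → ∞ for some constant C > 0; in particular the conditional probability P(X_1 X_3 > x | X_1 X_2 > x) tends to 0 at rate 1/log x. -/

import Mathlib

open MeasureTheory Filter Real Set

noncomputable def paretoMeasure (α : ℝ) : Measure ℝ :=
  MeasureTheory.volume.withDensity
    (fun x => ENNReal.ofReal (if 1 ≤ x then α * x ^ (-α - 1) else 0))

noncomputable def aSeq (α γ : ℝ) (n : ℕ) : ℝ := ((n : ℝ) ^ γ * Real.log n) ^ (1/α)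

/-!
Conditionally on `X₁ = y`, the events `X₁ X₂ > x` and `X₁ X₃ > x` are independent, each of
probability `S (x / y)` with `S t = max t 1 ^ (-α)` the Pareto survival function. Hence
`P(X₁ X₂ > x) = E S(x / X₁)` and `P(X₁ X₂ > x, X₁ X₃ > x) = E S(x / X₁)²`. For `1 < y ≤ x` one has
`S (x / y) = x ^ (-α) y ^ α`, and for `y > x` it is `1`, so both expectations are explicit:
`x ^ (-α) (1 + α log x)` and `x ^ (-α) (2 - x ^ (-α))`. Thus `C = 2`.
-/

namespace MeasureTheory.Measure

variable {μ ν ρ : Measure ℝ}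

theorem prod_apply_mul_gt [SFinite ν] (x : ℝ) :
    (μ.prod ν) {p : ℝ × ℝ | p.1 * p.2 > x} = ∫⁻ y, ν {z | y * z > x} ∂μ :=
  prod_apply (measurableSet_lt measurable_const (measurable_fst.mul measurable_snd))

theorem prod_prod_apply_mul_gt_and_mul_gt [SFinite ν] [SFinite ρ] (x : ℝ) :
    (μ.prod (ν.prod ρ)) {p : ℝ × ℝ × ℝ | p.1 * p.2.1 > x ∧ p.1 * p.2.2 > x}
      = ∫⁻ y, ν {z | y * z > x} * ρ {z | y * z > x} ∂μ := by
  rw [prod_apply (by measurability)]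
  exact lintegral_congr fun y => prod_prod {z | y * z > x} {z | y * z > x}

end MeasureTheory.Measure

noncomputable def paretoSurvival (α t : ℝ) : ℝ := max t 1 ^ (-α)

section Pareto

variable {α : ℝ}

theorem paretoSurvival_nonneg (α t : ℝ) : 0 ≤ paretoSurvival α t :=
  rpow_nonneg (zero_le_one.trans (le_max_right _ _)) _

theorem paretoSurvival_le_one (hα : 0 ≤ α) (t : ℝ) : paretoSurvival α t ≤ 1 :=
  rpow_le_one_of_one_le_of_nonpos (le_max_right _ _) (neg_nonpos.mpr hα)

theorem paretoSurvival_of_le_one {t : ℝ} (ht : t ≤ 1) : paretoSurvival α t = 1 := by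
  rw [paretoSurvival, max_eq_right ht, one_rpow]

theorem paretoSurvival_of_one_le {t : ℝ} (ht : 1 ≤ t) : paretoSurvival α t = t ^ (-α) := by
  rw [paretoSurvival, max_eq_left ht]

theorem paretoMeasure_eq_withDensity_restrict (α : ℝ) :
    paretoMeasure α
      = (volume.restrict (Ioi 1)).withDensity fun y => ENNReal.ofReal (α * y ^ (-α - 1)) := by
  have hdens : (fun y : ℝ => ENNReal.ofReal (if 1 ≤ y then α * y ^ (-α - 1) else 0))
      = (Ici 1).indicator fun y => ENNReal.ofReal (α * y ^ (-α - 1)) := by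
    ext y; by_cases h : 1 ≤ y <;> simp [h]
  rw [paretoMeasure, hdens, withDensity_indicator measurableSet_Ici,
    Measure.restrict_congr_set Ioi_ae_eq_Ici]

instance (α : ℝ) : SFinite (paretoMeasure α) := by
  rw [paretoMeasure_eq_withDensity_restrict]; infer_instance

theorem ae_one_lt_paretoMeasure (α : ℝ) : ∀ᵐ y ∂paretoMeasure α, 1 < y := by
  rw [paretoMeasure_eq_withDensity_restrict]
  exact (withDensity_absolutelyContinuous _ _).ae_le (ae_restrict_mem measurableSet_Ioi)

theorem integrableOn_Ioi_mul_rpow_neg_sub_one (hα : 0 < α) {c : ℝ} (hc : 0 < c) :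
    IntegrableOn (fun y => α * y ^ (-α - 1)) (Ioi c) :=
  (integrableOn_Ioi_rpow_of_lt (by linarith) hc).const_mul α

theorem integral_Ioi_mul_rpow_neg_sub_one (hα : 0 < α) {c : ℝ} (hc : 0 < c) :
    ∫ y in Ioi c, α * y ^ (-α - 1) = c ^ (-α) := by
  rw [integral_const_mul, integral_Ioi_rpow_of_lt (by linarith) hc, sub_add_cancel]
  field_simp

theorem paretoMeasure_Ioi (hα : 0 < α) (t : ℝ) :
    paretoMeasure α (Ioi t) = ENNReal.ofReal (paretoSurvival α t) := by
  have hc : (0 : ℝ) < max t 1 := one_pos.trans_le (le_max_right _ _)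
  rw [paretoMeasure_eq_withDensity_restrict, withDensity_apply _ measurableSet_Ioi,
    Measure.restrict_restrict measurableSet_Ioi, Ioi_inter_Ioi,
    ← ofReal_integral_eq_lintegral_ofReal (integrableOn_Ioi_mul_rpow_neg_sub_one hα hc),
    integral_Ioi_mul_rpow_neg_sub_one hα hc, paretoSurvival]
  · exact (ae_restrict_iff' measurableSet_Ioi).mpr
      (ae_of_all _ fun y hy => by have := hc.trans hy; positivity)

theorem paretoMeasure_mul_gt (hα : 0 < α) (x : ℝ) {y : ℝ} (hy : 0 < y) :
    paretoMeasure α {z | y * z > x} = ENNReal.ofReal (paretoSurvival α (x / y)) := by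
  rw [← paretoMeasure_Ioi hα]
  congr 1
  ext z
  simp [div_lt_iff₀ hy, mul_comm]

theorem integrableOn_Ioi_one_mul_rpow_neg_sub_one_mul (hα : 0 < α) {g : ℝ → ℝ} {c : ℝ}
    (hg : AEStronglyMeasurable g) (hgc : ∀ y, ‖g y‖ ≤ c) :
    IntegrableOn (fun y => α * y ^ (-α - 1) * g y) (Ioi 1) :=
  (integrableOn_Ioi_mul_rpow_neg_sub_one hα one_pos).mul_bdd hg.restrict (ae_of_all _ hgc)

theorem lintegral_ofReal_paretoMeasure (hα : 0 < α) {g : ℝ → ℝ} {c : ℝ} (hg : Measurable g)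
    (hg0 : ∀ y, 0 ≤ g y) (hgc : ∀ y, g y ≤ c) :
    ∫⁻ y, ENNReal.ofReal (g y) ∂paretoMeasure α
      = ENNReal.ofReal (∫ y in Ioi 1, α * y ^ (-α - 1) * g y) := by
  have hint := integrableOn_Ioi_one_mul_rpow_neg_sub_one_mul hα hg.aestronglyMeasurable
    fun y => (Real.norm_of_nonneg (hg0 y)).trans_le (hgc y)
  rw [paretoMeasure_eq_withDensity_restrict,
    lintegral_withDensity_eq_lintegral_mul _ (by fun_prop) hg.ennreal_ofReal,
    ofReal_integral_eq_lintegral_ofReal hint]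
  · refine setLIntegral_congr_fun measurableSet_Ioi fun y hy => ?_
    have : 0 < y := one_pos.trans hy
    exact (ENNReal.ofReal_mul (by positivity)).symm
  · exact (ae_restrict_iff' measurableSet_Ioi).mpr
      (ae_of_all _ fun y (hy : 1 < y) => by have := one_pos.trans hy; have := hg0 y; positivity)

theorem measurable_paretoSurvival_div (α x : ℝ) :
    Measurable fun y => paretoSurvival α (x / y) := by
  unfold paretoSurvival; fun_prop

theorem lintegral_paretoMeasure_mul_gt_pow (hα : 0 < α) (x : ℝ) (k : ℕ) :
    ∫⁻ y, paretoMeasure α {z | y * z > x} ^ k ∂paretoMeasure α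
      = ENNReal.ofReal (∫ y in Ioi 1, α * y ^ (-α - 1) * paretoSurvival α (x / y) ^ k) := by
  rw [← lintegral_ofReal_paretoMeasure hα ((measurable_paretoSurvival_div α x).pow_const k)
    (fun y => pow_nonneg (paretoSurvival_nonneg α _) k)
    (fun y => pow_le_one₀ (paretoSurvival_nonneg α _) (paretoSurvival_le_one hα.le _))]
  refine lintegral_congr_ae ((ae_one_lt_paretoMeasure α).mono fun y hy => ?_)
  dsimp only
  rw [paretoMeasure_mul_gt hα x (one_pos.trans hy), ENNReal.ofReal_pow (paretoSurvival_nonneg α _)]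

theorem integral_Ioi_one_mul_paretoSurvival_div_pow (hα : 0 < α) {x : ℝ} (hx : 1 ≤ x)
    (k : ℕ) :
    ∫ y in Ioi 1, α * y ^ (-α - 1) * paretoSurvival α (x / y) ^ k
      = (∫ y in Ioc 1 x, α * y ^ (-α - 1) * (x ^ (-α) * y ^ α) ^ k) + x ^ (-α) := by
  have hx0 : 0 < x := one_pos.trans_le hx
  have hint := integrableOn_Ioi_one_mul_rpow_neg_sub_one_mul hα
    ((measurable_paretoSurvival_div α x).pow_const k).aestronglyMeasurable fun y => by
      rw [norm_pow, Real.norm_of_nonneg (paretoSurvival_nonneg α _)]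
      exact pow_le_one₀ (paretoSurvival_nonneg α _) (paretoSurvival_le_one hα.le _)
  rw [← Ioc_union_Ioi_eq_Ioi hx, setIntegral_union Ioc_disjoint_Ioi_same measurableSet_Ioi
      (hint.mono_set Ioc_subset_Ioi_self) (hint.mono_set (Ioi_subset_Ioi hx))]
  congr 1
  · refine setIntegral_congr_fun measurableSet_Ioc fun y ⟨hy1, hyx⟩ => ?_
    have hy0 : 0 < y := one_pos.trans hy1
    rw [paretoSurvival_of_one_le ((one_le_div hy0).mpr hyx), div_rpow hx0.le hy0.le,
      rpow_neg hy0.le, div_eq_mul_inv, inv_inv]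
  · rw [← integral_Ioi_mul_rpow_neg_sub_one hα hx0]
    refine setIntegral_congr_fun measurableSet_Ioi fun y (hy : x < y) => ?_
    rw [paretoSurvival_of_le_one ((div_le_one (hx0.trans hy)).mpr hy.le), one_pow, mul_one]

theorem integral_Ioc_one_mul_rpow_mul {x : ℝ} (hx : 1 ≤ x) :
    ∫ y in Ioc 1 x, α * y ^ (-α - 1) * (x ^ (-α) * y ^ α) = α * x ^ (-α) * Real.log x := by
  have hcongr : ∫ y in Ioc 1 x, α * y ^ (-α - 1) * (x ^ (-α) * y ^ α)
      = ∫ y in Ioc 1 x, α * x ^ (-α) * y⁻¹ := by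
    refine setIntegral_congr_fun measurableSet_Ioc fun y hy => ?_
    have hy0 : 0 < y := one_pos.trans hy.1
    have hexp : y ^ (-α - 1) * y ^ α = y⁻¹ := by
      rw [← rpow_add hy0, show -α - 1 + α = -1 by ring, rpow_neg_one]
    linear_combination α * x ^ (-α) * hexp
  rw [hcongr, integral_const_mul, ← intervalIntegral.integral_of_le hx,
    integral_inv (by rw [uIcc_of_le hx]; rintro ⟨h0, -⟩; linarith), div_one]

theorem integral_Ioc_one_mul_rpow_mul_sq (hα : 0 < α) {x : ℝ} (hx : 1 ≤ x) :
    ∫ y in Ioc 1 x, α * y ^ (-α - 1) * (x ^ (-α) * y ^ α) ^ 2 = x ^ (-α) - (x ^ (-α)) ^ 2 := by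
  have hx0 : 0 < x := one_pos.trans_le hx
  have hcongr : ∫ y in Ioc 1 x, α * y ^ (-α - 1) * (x ^ (-α) * y ^ α) ^ 2
      = ∫ y in Ioc 1 x, α * (x ^ (-α)) ^ 2 * y ^ (α - 1) := by
    refine setIntegral_congr_fun measurableSet_Ioc fun y hy => ?_
    have hy0 : 0 < y := one_pos.trans hy.1
    have hexp : y ^ (-α - 1) * (y ^ α) ^ 2 = y ^ (α - 1) := by
      rw [sq, ← rpow_add hy0, ← rpow_add hy0, show -α - 1 + (α + α) = α - 1 by ring]
    linear_combination α * (x ^ (-α)) ^ 2 * hexp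
  have hinv : x ^ (-α) * x ^ α = 1 := by rw [← rpow_add hx0, neg_add_cancel, rpow_zero]
  rw [hcongr, integral_const_mul, ← intervalIntegral.integral_of_le hx,
    integral_rpow (Or.inl (by linarith)), sub_add_cancel, one_rpow]
  field_simp
  linear_combination hinv

theorem paretoMeasure_prod_apply_mul_gt (hα : 0 < α) {x : ℝ} (hx : 1 ≤ x) :
    ((paretoMeasure α).prod (paretoMeasure α)) {p : ℝ × ℝ | p.1 * p.2 > x}
      = ENNReal.ofReal (x ^ (-α) * (1 + α * Real.log x)) := by
  have h := lintegral_paretoMeasure_mul_gt_pow hα x 1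
  rw [integral_Ioi_one_mul_paretoSurvival_div_pow hα hx] at h
  simp only [pow_one] at h
  rw [Measure.prod_apply_mul_gt, h, integral_Ioc_one_mul_rpow_mul hx]
  ring_nf

theorem paretoMeasure_prod_prod_apply_mul_gt_and_mul_gt (hα : 0 < α) {x : ℝ} (hx : 1 ≤ x) :
    ((paretoMeasure α).prod ((paretoMeasure α).prod (paretoMeasure α)))
        {p : ℝ × ℝ × ℝ | p.1 * p.2.1 > x ∧ p.1 * p.2.2 > x}
      = ENNReal.ofReal (x ^ (-α) * (2 - x ^ (-α))) := by
  rw [Measure.prod_prod_apply_mul_gt_and_mul_gt]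
  simp_rw [← sq]
  rw [lintegral_paretoMeasure_mul_gt_pow hα,
    integral_Ioi_one_mul_paretoSurvival_div_pow hα hx, integral_Ioc_one_mul_rpow_mul_sq hα hx]
  ring_nf

end Pareto

section Asymptotics

variable {α : ℝ}

theorem tendsto_two_sub_rpow_neg_div_two (hα : 0 < α) :
    Tendsto (fun x : ℝ => x ^ (-α) * (2 - x ^ (-α)) / (2 * x ^ (-α))) atTop (nhds 1) := by
  have hlim : Tendsto (fun x : ℝ => 1 - x ^ (-α) / 2) atTop (nhds 1) := by
    simpa using tendsto_const_nhds.sub ((tendsto_rpow_neg_atTop hα).div_const 2)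
  refine hlim.congr' ((eventually_gt_atTop 0).mono fun x hx => ?_)
  have : 0 < x ^ (-α) := rpow_pos_of_pos hx _
  field_simp

theorem tendsto_two_sub_rpow_neg_div_one_add_mul_log_mul_log (hα : 0 < α) :
    Tendsto (fun x : ℝ => x ^ (-α) * (2 - x ^ (-α)) / (x ^ (-α) * (1 + α * Real.log x))
      * Real.log x) atTop (nhds (2 / α)) := by
  have hnum : Tendsto (fun x : ℝ => 2 - x ^ (-α)) atTop (nhds 2) := by
    simpa using tendsto_const_nhds.sub (tendsto_rpow_neg_atTop hα)
  have hden : Tendsto (fun x : ℝ => (Real.log x)⁻¹ + α) atTop (nhds α) := by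
    simpa using (tendsto_inv_atTop_zero.comp tendsto_log_atTop).add_const α
  refine (hnum.div hden hα.ne').congr' ((eventually_gt_atTop 1).mono fun x hx => ?_)
  have : 0 < x ^ (-α) := rpow_pos_of_pos (one_pos.trans hx) _
  have : 0 < Real.log x := log_pos hx
  rw [Pi.div_apply]
  field_simp

end Asymptotics

theorem stmt1 (α : ℝ) (hα : 0 < α) :
    ∃ C > (0 : ℝ),
      Tendsto (fun x : ℝ =>
        (((paretoMeasure α).prod ((paretoMeasure α).prod (paretoMeasure α)))
          {p : ℝ × ℝ × ℝ | p.1 * p.2.1 > x ∧ p.1 * p.2.2 > x}).toReal / (C * x ^ (-α)))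
        atTop (nhds 1) ∧
      Tendsto (fun x : ℝ =>
        (((paretoMeasure α).prod ((paretoMeasure α).prod (paretoMeasure α)))
          {p : ℝ × ℝ × ℝ | p.1 * p.2.1 > x ∧ p.1 * p.2.2 > x}).toReal
          / (((paretoMeasure α).prod (paretoMeasure α)) {p : ℝ × ℝ | p.1 * p.2 > x}).toReal
          * Real.log x) atTop (nhds (C / α)) := by
  have hbounds : ∀ᶠ x : ℝ in atTop, 1 ≤ x ∧ 0 ≤ x ^ (-α) ∧ x ^ (-α) ≤ 1 :=
    (eventually_ge_atTop 1).mono fun x hx =>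
      ⟨hx, rpow_nonneg (zero_le_one.trans hx) _,
        rpow_le_one_of_one_le_of_nonpos hx (neg_nonpos.mpr hα.le)⟩
  have htriple : ∀ᶠ x : ℝ in atTop,
      (((paretoMeasure α).prod ((paretoMeasure α).prod (paretoMeasure α)))
        {p : ℝ × ℝ × ℝ | p.1 * p.2.1 > x ∧ p.1 * p.2.2 > x}).toReal
      = x ^ (-α) * (2 - x ^ (-α)) := by
    filter_upwards [hbounds] with x ⟨hx, h0, h1⟩
    rw [paretoMeasure_prod_prod_apply_mul_gt_and_mul_gt hα hx, ENNReal.toReal_ofReal]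
    nlinarith
  have hpair : ∀ᶠ x : ℝ in atTop,
      (((paretoMeasure α).prod (paretoMeasure α)) {p : ℝ × ℝ | p.1 * p.2 > x}).toReal
      = x ^ (-α) * (1 + α * Real.log x) := by
    filter_upwards [hbounds] with x ⟨hx, h0, _⟩
    have := log_nonneg hx
    rw [paretoMeasure_prod_apply_mul_gt hα hx, ENNReal.toReal_ofReal (by positivity)]
  refine ⟨2, two_pos, ?_, ?_⟩
  · exact (tendsto_two_sub_rpow_neg_div_two hα).congr' (htriple.mono fun x hx => by rw [← hx])
  · exact (tendsto_two_sub_rpow_neg_div_one_add_mul_log_mul_log hα).congr'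
      ((htriple.and hpair).mono fun x hx => by rw [← hx.1, ← hx.2])
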